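/- arXiv:1805.09729 — 2 statements merged into one kernel-verified Lean document; each statement's English description precedes it below -/
import Mathlib

section
/- If λ is an additive character of Z/nZ of order n (i.e., λ(x) = exp(2πi a x / n) with gcd(a,n) = 1) and χ is a multiplicative character of (Z/nZ)*, then the Gauss sum G(GL_r(Z/nZ), χ, λ) = ∑_{X ∈ GL_r(Z/nZ)} χ(det X) λ(tr X) equals G(Z/nZ, χ, λ)^r · n^{r(r-1)/2}, where G(Z/nZ, χ, λ) = ∑_{x ∈ (Z/nZ)*} χ(x) λ(x). -/
open scoped BigOperators

/-- The additive character `x ↦ exp(2πi a x / n)` of `ℤ/nℤ`, evaluated on the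
natural representative `v` of a residue class. -/
noncomputable def addChar (n : ℕ) (a : ℤ) (v : ℕ) : ℂ :=
  Complex.exp (2 * Real.pi * Complex.I * a * v / n)

/-!
Write `F(ι) = ∑ χ(det M) ψ(tr M)` over all `ι × ι` matrices; as `χ` vanishes on non-units, the
sum over `GL_r` is `F(Fin r)`. Split a matrix on `ι ⊕ κ` into blocks `[[A, B], [C, D]]`. Right
multiplication by `[[1, V], [0, 1]]` preserves the determinant, shifts `B` by `A V` and `D` by
`C V`, and multiplies `ψ(tr)` by `ψ(tr(C V))`. For `C ≠ 0` primitivity of `ψ` provides a `V` with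
`ψ(tr(C V)) ≠ 1`, so the sum over the matrices with lower-left block `C` vanishes. Only block
upper triangular matrices survive, whence `F(ι ⊕ κ) = |R|^{|ι||κ|} F(ι) F(κ)`, and induction on
`r` from `F(1) = G(χ, ψ)` gives the formula.
-/

open Matrix Finset

lemma Fintype.sum_units_eq_sum {M K : Type*} [Monoid M] [Fintype M] [DecidableEq M]
    [AddCommMonoid K] (f : M → K) (hf : ∀ x, ¬IsUnit x → f x = 0) :
    ∑ u : Mˣ, f u = ∑ x, f x :=
  Fintype.sum_of_injective _ Units.val_injective _ _
    (fun x hx => hf x fun hu => hx ⟨hu.unit, rfl⟩) fun _ => rfl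

lemma Fintype.card_matrix {ι κ α : Type*} [Fintype ι] [Fintype κ] [DecidableEq ι]
    [DecidableEq κ] [Fintype α] :
    Fintype.card (Matrix ι κ α) = Fintype.card α ^ (Fintype.card ι * Fintype.card κ) := by
  rw [Fintype.card_congr of.symm, Fintype.card_fun, Fintype.card_fun, ← pow_mul, mul_comm]

lemma AddChar.IsPrimitive.mulShift_of_isUnit {R R' : Type*} [CommRing R] [CommMonoid R']
    {ψ : AddChar R R'} (hψ : ψ.IsPrimitive) {u : R} (hu : IsUnit u) :
    (ψ.mulShift u).IsPrimitive := fun b hb => by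
  rw [AddChar.mulShift_mulShift]
  exact hψ (hu.mul_right_eq_zero.not.2 hb)

namespace Matrix

variable {ι κ α : Type*} [Fintype ι] [Fintype κ]

lemma trace_fromBlocks [AddCommMonoid α] (A : Matrix ι ι α) (B : Matrix ι κ α)
    (C : Matrix κ ι α) (D : Matrix κ κ α) : (fromBlocks A B C D).trace = A.trace + D.trace := by
  simp [trace, Fintype.sum_sum_type]

lemma trace_reindex [AddCommMonoid α] (e : ι ≃ κ) (M : Matrix ι ι α) :
    (reindex e e M).trace = M.trace :=
  Fintype.sum_equiv e.symm _ _ fun _ => rfl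

lemma trace_fromBlocks_add_mul [Ring α] (A : Matrix ι ι α) (B : Matrix ι κ α)
    (C : Matrix κ ι α) (D : Matrix κ κ α) (V : Matrix ι κ α) :
    (fromBlocks A (A * V + B) C (C * V + D)).trace =
      (fromBlocks A B C D).trace + (C * V).trace := by
  rw [trace_fromBlocks, trace_fromBlocks, trace_add]
  abel

variable [DecidableEq ι] [DecidableEq κ]

lemma sum_fromBlocks [Fintype α] {β : Type*} [AddCommMonoid β]
    (f : Matrix (ι ⊕ κ) (ι ⊕ κ) α → β) :
    ∑ M, f M = ∑ C, ∑ A, ∑ B, ∑ D, f (fromBlocks A B C D) := by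
  let e : Matrix κ ι α × Matrix ι ι α × Matrix ι κ α × Matrix κ κ α ≃
      Matrix (ι ⊕ κ) (ι ⊕ κ) α :=
    { toFun x := fromBlocks x.2.1 x.2.2.1 x.1 x.2.2.2
      invFun M := (M.toBlocks₂₁, M.toBlocks₁₁, M.toBlocks₁₂, M.toBlocks₂₂)
      left_inv _ := by simp
      right_inv M := fromBlocks_toBlocks M }
  rw [← e.sum_comp]
  simp only [Fintype.sum_prod_type]
  rfl

lemma fromBlocks_mul_fromBlocks_one_zero_one [Ring α] (A : Matrix ι ι α) (B : Matrix ι κ α)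
    (C : Matrix κ ι α) (D : Matrix κ κ α) (V : Matrix ι κ α) :
    fromBlocks A B C D * fromBlocks 1 V 0 1 = fromBlocks A (A * V + B) C (C * V + D) := by
  simp [fromBlocks_multiply, add_comm]

lemma det_fromBlocks_add_mul [CommRing α] (A : Matrix ι ι α) (B : Matrix ι κ α)
    (C : Matrix κ ι α) (D : Matrix κ κ α) (V : Matrix ι κ α) :
    (fromBlocks A (A * V + B) C (C * V + D)).det = (fromBlocks A B C D).det := by
  rw [← fromBlocks_mul_fromBlocks_one_zero_one, det_mul, det_fromBlocks_zero₂₁]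
  simp

lemma exists_addChar_trace_mul_ne_one {R K : Type*} [CommRing R] [CommMonoid K]
    {ψ : AddChar R K} (hψ : ψ.IsPrimitive) {C : Matrix κ ι R} (hC : C ≠ 0) :
    ∃ V : Matrix ι κ R, ψ (C * V).trace ≠ 1 := by
  obtain ⟨j, i, hji⟩ : ∃ j i, C j i ≠ 0 := by
    contrapose! hC
    exact ext hC
  obtain ⟨x, hx⟩ := AddChar.ne_one_iff.1 (hψ hji)
  refine ⟨single i j x, ?_⟩
  simpa [trace_mul_single] using hx

end Matrix

section MatrixGaussSum

variable {R K : Type*} [CommRing R] [Fintype R] [CommRing K]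
  (χ : MulChar R K) (ψ : AddChar R K)

def matrixGaussSum (ι : Type*) [Fintype ι] [DecidableEq ι] : K :=
  ∑ M : Matrix ι ι R, χ M.det * ψ M.trace

variable {ι κ : Type*} [Fintype ι] [DecidableEq ι] [Fintype κ] [DecidableEq κ]

lemma matrixGaussSum_congr (e : ι ≃ κ) : matrixGaussSum χ ψ ι = matrixGaussSum χ ψ κ :=
  Fintype.sum_equiv (reindex e e) _ _ fun M => by rw [det_reindex_self, trace_reindex]

lemma matrixGaussSum_of_isEmpty [IsEmpty ι] : matrixGaussSum χ ψ ι = 1 := by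
  have : Unique (Matrix ι ι R) := Pi.uniqueOfIsEmpty _
  rw [matrixGaussSum, Fintype.sum_unique]
  simp [trace_eq_zero_of_isEmpty]

lemma matrixGaussSum_of_unique [Unique ι] : matrixGaussSum χ ψ ι = gaussSum χ ψ := by
  refine Fintype.sum_equiv (of.symm.trans ((Equiv.funUnique ι _).trans (Equiv.funUnique ι R)))
    _ _ fun M => ?_
  simp [det_unique, trace]

lemma sum_fromBlocks_eq_zero_of_ne_zero [IsDomain K] (hψ : ψ.IsPrimitive) {C : Matrix κ ι R}
    (hC : C ≠ 0) :
    ∑ A, ∑ B, ∑ D, χ (fromBlocks A B C D).det * ψ (fromBlocks A B C D).trace = 0 := by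
  obtain ⟨V, hV⟩ := exists_addChar_trace_mul_ne_one hψ hC
  refine eq_zero_of_mul_eq_self_left hV ?_
  calc ψ (C * V).trace * _
      = ∑ A, ∑ B, ∑ D, χ (fromBlocks A (A * V + B) C (C * V + D)).det *
          ψ (fromBlocks A (A * V + B) C (C * V + D)).trace := by
        simp only [mul_sum, det_fromBlocks_add_mul, trace_fromBlocks_add_mul,
          AddChar.map_add_eq_mul]
        ring_nf
    _ = _ := sum_congr rfl fun A _ =>
        Fintype.sum_equiv (Equiv.addLeft (A * V)) _ _ fun B =>
          Equiv.sum_comp (Equiv.addLeft (C * V)) fun D =>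
            χ (fromBlocks A (A * V + B) C D).det * ψ (fromBlocks A (A * V + B) C D).trace

lemma matrixGaussSum_sum [IsDomain K] (hψ : ψ.IsPrimitive) :
    matrixGaussSum χ ψ (ι ⊕ κ) =
      (Fintype.card R : K) ^ (Fintype.card ι * Fintype.card κ) *
        matrixGaussSum χ ψ ι * matrixGaussSum χ ψ κ := by
  rw [matrixGaussSum, sum_fromBlocks, sum_eq_single 0
    (fun C _ hC => sum_fromBlocks_eq_zero_of_ne_zero χ ψ hψ hC) (by simp)]
  calc ∑ A, ∑ B, ∑ D, χ (fromBlocks A B 0 D).det * ψ (fromBlocks A B 0 D).trace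
      = ∑ A : Matrix ι ι R, ∑ _B : Matrix ι κ R,
          χ A.det * ψ A.trace * matrixGaussSum χ ψ κ := by
        refine sum_congr rfl fun A _ => sum_congr rfl fun B _ => ?_
        rw [matrixGaussSum, mul_sum]
        refine sum_congr rfl fun D _ => ?_
        rw [det_fromBlocks_zero₂₁, trace_fromBlocks, map_mul, AddChar.map_add_eq_mul]
        ring
    _ = _ := by
        simp only [matrixGaussSum, sum_const, card_univ, nsmul_eq_mul, Fintype.card_matrix,
          ← mul_sum, ← sum_mul]
        push_cast
        ring

lemma matrixGaussSum_fin [IsDomain K] (hψ : ψ.IsPrimitive) (r : ℕ) :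
    matrixGaussSum χ ψ (Fin r) =
      gaussSum χ ψ ^ r * (Fintype.card R : K) ^ (r * (r - 1) / 2) := by
  induction r with
  | zero => simp [matrixGaussSum_of_isEmpty]
  | succ m ih =>
    rw [← matrixGaussSum_congr χ ψ (finSumFinEquiv (m := m) (n := 1)),
      matrixGaussSum_sum χ ψ hψ, matrixGaussSum_of_unique (ι := Fin 1), ih,
      ← sum_range_id, ← sum_range_id, sum_range_succ]
    simp only [Fintype.card_fin, mul_one, pow_succ, pow_add]
    ring

end MatrixGaussSum

lemma ZMod.isPrimitive_stdAddChar_mulShift {n : ℕ} [NeZero n] {a : ℤ} (ha : Int.gcd a n = 1) :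
    (ZMod.stdAddChar.mulShift (a : ZMod n)).IsPrimitive :=
  (ZMod.isPrimitive_stdAddChar n).mulShift_of_isUnit
    ((ZMod.coe_int_isUnit_iff_isCoprime a n).2 (Int.isCoprime_iff_gcd_eq_one.2 ha).symm)

lemma addChar_eq_stdAddChar_mulShift (n : ℕ) [NeZero n] (a : ℤ) (x : ZMod n) :
    addChar n a x.val = ZMod.stdAddChar.mulShift (a : ZMod n) x := by
  have hx : (a : ZMod n) * x = ((a * x.val : ℤ) : ZMod n) := by
    push_cast
    rw [ZMod.natCast_zmod_val]
  rw [AddChar.mulShift_apply, hx, ZMod.stdAddChar_coe, addChar]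
  push_cast
  ring_nf

theorem gauss_sum_GL_primitive_general (n r : ℕ) [NeZero n] (a : ℤ)
    (ha : Int.gcd a n = 1) (χ : DirichletCharacter ℂ n) :
    (∑ X : GL (Fin r) (ZMod n),
        χ (X.val.det) * addChar n a (X.val.trace).val) =
      (∑ x : (ZMod n)ˣ, χ x * addChar n a (x : ZMod n).val) ^ r *
        (n : ℂ) ^ (r * (r - 1) / 2) := by
  simp only [addChar_eq_stdAddChar_mulShift]
  set ψ := ZMod.stdAddChar.mulShift (a : ZMod n)
  have hGL : ∑ X : GL (Fin r) (ZMod n), χ X.val.det * ψ X.val.trace =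
      matrixGaussSum χ ψ (Fin r) :=
    Fintype.sum_units_eq_sum (fun M : Matrix (Fin r) (Fin r) (ZMod n) => χ M.det * ψ M.trace)
      fun M hM => by rw [χ.map_nonunit (mt (isUnit_iff_isUnit_det M).2 hM), zero_mul]
  have hunits : ∑ x : (ZMod n)ˣ, χ x * ψ x = gaussSum χ ψ :=
    Fintype.sum_units_eq_sum (fun x => χ x * ψ x) fun x hx => by rw [χ.map_nonunit hx, zero_mul]
  rw [hGL, hunits, matrixGaussSum_fin χ ψ (ZMod.isPrimitive_stdAddChar_mulShift ha), ZMod.card]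

/-- Gauss sum for `GL_r(ℤ/nℤ)`: if `λ(x) = exp(2πi a x/n)` has order `n`
(i.e. `gcd(a,n) = 1`) and `χ` is a multiplicative character of `(ℤ/nℤ)*`, then
`∑_{X ∈ GL_r} χ(det X) λ(tr X) = G(ℤ/nℤ, χ, λ)^r · n^{r(r-1)/2}`. -/
theorem gauss_sum_GL_primitive (n r : ℕ) [NeZero n] (hr : 1 ≤ r) (a : ℤ)
    (ha : Int.gcd a n = 1) (χ : DirichletCharacter ℂ n) :
    (∑ X : GL (Fin r) (ZMod n),
        χ (X.val.det) * addChar n a (X.val.trace).val) =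
      (∑ x : (ZMod n)ˣ, χ x * addChar n a (x : ZMod n).val) ^ r *
        (n : ℂ) ^ (r * (r - 1) / 2) :=
  gauss_sum_GL_primitive_general n r a ha χ
end

section
/- Let λ(x) = exp(2πi a x/n) be an additive character of Z/nZ with d = gcd(a,n), let χ be a multiplicative character of (Z/nZ)* with conductor f. If f does not divide n/d, then G(GL_r(Z/nZ), χ, λ) = ∑_{X ∈ GL_r(Z/nZ)} χ(det X) λ(tr X) = 0. -/
open scoped BigOperators

theorem Fintype.sum_eq_zero_of_apply_mul_left_eq_mul {G M : Type*} [Group G] [Fintype G]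
    [Semiring M] [IsRightCancelMulZero M] {F : G → M} (g : G) {c : M} (hc : c ≠ 1)
    (h : ∀ x, F (g * x) = c * F x) : ∑ x, F x = 0 :=
  eq_zero_of_mul_eq_self_left hc <| by
    simp_rw [Finset.mul_sum, ← h]
    exact Fintype.sum_equiv (Equiv.mulLeft g) _ _ fun _ => rfl

namespace Matrix

variable {ι R : Type*} [Fintype ι] [DecidableEq ι] [Semiring R]

theorem mul_trace_diagonal_mul {a : R} {v : ι → R} (hv : ∀ i, a * v i = a)
    (A : Matrix ι ι R) : a * (diagonal v * A).trace = a * A.trace := by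
  simp only [trace, diag, diagonal_mul, Finset.mul_sum, ← mul_assoc, hv]

def GeneralLinearGroup.diagonal (v : ι → Rˣ) : GL ι R :=
  ⟨Matrix.diagonal fun i => (v i : R), Matrix.diagonal fun i => ((v i)⁻¹ : Rˣ), by simp, by simp⟩

@[simp]
theorem GeneralLinearGroup.val_diagonal (v : ι → Rˣ) :
    (GeneralLinearGroup.diagonal v).val = Matrix.diagonal fun i => (v i : R) :=
  rfl

end Matrix

theorem Int.natCast_dvd_mul_div_gcd (a : ℤ) (n : ℕ) : (n : ℤ) ∣ a * (n / a.gcd n : ℕ) := by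
  obtain ⟨k, hk⟩ := Int.gcd_dvd_left a n
  have hg : a.gcd n ∣ n := by exact_mod_cast Int.gcd_dvd_right a n
  refine ⟨k, ?_⟩
  nth_rw 1 [hk]
  rw [mul_comm _ k, mul_assoc, ← Nat.cast_mul, Nat.mul_div_cancel' hg, mul_comm]

theorem ZMod.intCast_mul_eq_self_of_unitsMap_eq_one {n m : ℕ} (hm : m ∣ n) {a : ℤ}
    (ha : (n : ℤ) ∣ a * m) {c : (ZMod n)ˣ} (hc : unitsMap hm c = 1) : (a : ZMod n) * c = a := by
  set k : ℤ := cast ((c : ZMod n) - 1)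
  have hk : (m : ℤ) ∣ k := by
    rw [← intCast_zmod_eq_zero_iff_dvd, intCast_cast, cast_sub hm, cast_one hm,
      ← unitsMap_val hm, hc, Units.val_one, sub_self]
  have : (a : ZMod n) * ((c : ZMod n) - 1) = 0 := by
    rw [← intCast_zmod_cast ((c : ZMod n) - 1), ← Int.cast_mul, intCast_zmod_eq_zero_iff_dvd]
    exact ha.trans (mul_dvd_mul_left a hk)
  rwa [mul_sub, mul_one, sub_eq_zero] at this

theorem addChar_eq_toCircle {n : ℕ} [NeZero n] (a : ℤ) (y : ZMod n) :
    addChar n a y.val = (ZMod.toCircle ((a : ZMod n) * y) : ℂ) := by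
  have : (a : ZMod n) * y = ((a * y.val : ℤ) : ZMod n) := by simp
  rw [this, ZMod.toCircle_intCast, addChar]
  push_cast
  ring_nf

theorem DirichletCharacter.exists_unitsMap_eq_one_apply_ne_one {R : Type*}
    [CommMonoidWithZero R] {n m : ℕ} [NeZero n] (χ : DirichletCharacter R n) (hm : m ∣ n)
    (hf : ¬ χ.conductor ∣ m) : ∃ c : (ZMod n)ˣ, ZMod.unitsMap hm c = 1 ∧ χ c ≠ 1 := by
  have : ¬ χ.FactorsThrough m := fun h => hf (χ.conductor_dvd_of_mem_conductorSet h)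
  rw [factorsThrough_iff_ker_unitsMap hm, SetLike.not_le_iff_exists] at this
  obtain ⟨c, hc, hχc⟩ := this
  exact ⟨c, hc, fun h => hχc (Units.ext (by simpa using h))⟩

/-- If the conductor `f` of `χ` does not divide `n/d`, where `d = gcd(a,n)` and
`λ(x) = exp(2πi a x/n)`, then the Gauss sum `G(GL_r(ℤ/nℤ), χ, λ)` vanishes. -/
theorem gauss_sum_GL_eq_zero (n r : ℕ) [NeZero n] (hr : 1 ≤ r) (a : ℤ) (d : ℕ)
    (hd : d = Int.gcd a n) (χ : DirichletCharacter ℂ n)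
    (hf : ¬ χ.conductor ∣ n / d) :
    (∑ X : GL (Fin r) (ZMod n),
        χ (X.val.det) * addChar n a (X.val.trace).val) = 0 := by
  subst hd
  obtain ⟨c, hc, hχc⟩ := χ.exists_unitsMap_eq_one_apply_ne_one
    (Nat.div_dvd_of_dvd (by exact_mod_cast Int.gcd_dvd_right a n)) hf
  have hac : (a : ZMod n) * c = a :=
    ZMod.intCast_mul_eq_self_of_unitsMap_eq_one _ (Int.natCast_dvd_mul_div_gcd a n) hc
  set v : Fin r → (ZMod n)ˣ := Pi.mulSingle ⟨0, hr⟩ c with hv_def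
  have hv (i : Fin r) : (a : ZMod n) * v i = a := by
    rw [hv_def, Pi.mulSingle_apply]
    split_ifs
    exacts [hac, by simp]
  refine Fintype.sum_eq_zero_of_apply_mul_left_eq_mul
    (Matrix.GeneralLinearGroup.diagonal v) hχc fun X => ?_
  rw [Units.val_mul, Matrix.det_mul, map_mul, addChar_eq_toCircle, addChar_eq_toCircle,
    Matrix.GeneralLinearGroup.val_diagonal, Matrix.mul_trace_diagonal_mul hv, Matrix.det_diagonal,
    ← Units.coe_prod, hv_def, Fintype.prod_pi_mulSingle', mul_assoc]
end
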